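/- arXiv:2111.14140 — 4 statements merged into one kernel-verified Lean document; each statement's English description precedes it below -/
import Mathlib

section
/- Let $k,f\ge 2$ be integers and $0<\gamma<1$, and set $c=\lfloor 1/\gamma\rfloor$. Choose $\beta>0$ with $(c+1)\gamma > 1 + (c+1)^2\beta$. Let $F$ be a $k$-uniform hypergraph on $f$ vertices and let $H$ be a $k$-uniform hypergraph on $n$ vertices (with $n$ sufficiently large) such that every vertex of $H$ is contained in at least $\gamma n^{f-1}$ copies of $F$. Then every set of $c+1$ vertices of $H$ contains two vertices $u,w$ such that there are at least $\beta n^{f-1}$ sets $W$ of $f-1$ vertices with both $H[\{u\}\cup W]$ and $H[\{w\}\cup W]$ containing spanning copies of $F$. -/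
open Finset
open scoped Classical

/-- `S` spans a copy of the `k`-graph with edge set `EF` (on vertex type `VF`)
inside the hypergraph with edge set `E`. -/
def HasSpanningCopy {VF α : Type*} [Fintype VF] [DecidableEq α]
    (EF : Finset (Finset VF)) (E : Finset (Finset α)) (S : Finset α) : Prop :=
  ∃ φ : VF → α, Function.Injective φ ∧ Finset.image φ Finset.univ = S ∧
    ∀ e ∈ EF, e.image φ ∈ E

/-!
Let `A v` be the family of `(f - 1)`-sets `W` such that `{v} ∪ W` spans a copy of `F`.
A Bonferroni inequality bounds `∑_{v ∈ T} |A v|` by `|⋃ A v|` plus the sum of the pairwise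
intersections. The union has at most `n ^ (f - 1)` members while the left side is at least
`(c + 1) γ n ^ (f - 1)`, so if every pairwise intersection had fewer than `β n ^ (f - 1)`
members, then `(c + 1) γ ≤ 1 + (c + 1) c β`, contradicting the choice of `β`.
-/

namespace Finset

theorem card_powersetCard_univ_le_pow {β : Type*} [Fintype β] (m : ℕ) :
    #((univ : Finset β).powersetCard m) ≤ Fintype.card β ^ m := by
  rw [card_powersetCard, card_univ]
  exact Nat.choose_le_pow _ m

variable {α β : Type*} [DecidableEq α] [DecidableEq β]

theorem sum_card_le_card_biUnion_add_sum_card_inter (A : α → Finset β) (T : Finset α) :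
    ∑ v ∈ T, #(A v) ≤ #(T.biUnion A) + ∑ u ∈ T, ∑ w ∈ T.erase u, #(A u ∩ A w) := by
  induction T using Finset.induction_on with
  | empty => simp
  | @insert a s ha ih =>
    have hinter : #(A a ∩ s.biUnion A) ≤ ∑ w ∈ s, #(A a ∩ A w) := by
      rw [inter_biUnion]
      exact card_biUnion_le
    have hpairs : ∑ u ∈ s, ∑ w ∈ s.erase u, #(A u ∩ A w) ≤
        ∑ u ∈ s, ∑ w ∈ (insert a s).erase u, #(A u ∩ A w) := by
      refine sum_le_sum fun u hu => ?_
      rw [erase_insert_of_ne (ne_of_mem_of_not_mem hu ha).symm,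
        sum_insert fun h => ha (mem_of_mem_erase h)]
      exact Nat.le_add_left _ _
    have hunion := card_union_add_card_inter (A a) (s.biUnion A)
    rw [sum_insert ha, biUnion_insert, sum_insert ha, erase_insert ha]
    omega

theorem exists_ne_le_card_inter {A : α → Finset β} {T : Finset α} {U : Finset β}
    (hAU : ∀ v ∈ T, A v ⊆ U) {a b : ℝ} (ha : ∀ v ∈ T, a ≤ #(A v))
    (h : #U + #T * (#T - 1) * b < #T * a) :
    ∃ u ∈ T, ∃ w ∈ T, u ≠ w ∧ b ≤ #(A u ∩ A w) := by
  by_contra! hlt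
  have hbonf : (∑ v ∈ T, #(A v) : ℝ) ≤ #U + ∑ u ∈ T, ∑ w ∈ T.erase u, (#(A u ∩ A w) : ℝ) := by
    have hU : #(T.biUnion A) ≤ #U := card_le_card (biUnion_subset.mpr hAU)
    exact_mod_cast (sum_card_le_card_biUnion_add_sum_card_inter A T).trans (by omega)
  have hpairs : ∑ u ∈ T, ∑ w ∈ T.erase u, (#(A u ∩ A w) : ℝ) ≤ #T * (#T - 1) * b := by
    calc ∑ u ∈ T, ∑ w ∈ T.erase u, (#(A u ∩ A w) : ℝ)
        ≤ ∑ u ∈ T, ∑ _w ∈ T.erase u, b := by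
          refine sum_le_sum fun u hu => sum_le_sum fun w hw => ?_
          exact (hlt u hu w (mem_of_mem_erase hw) (ne_of_mem_erase hw).symm).le
      _ = ∑ _u ∈ T, (#T - 1 : ℝ) * b := sum_congr rfl fun u hu => by
          rw [sum_const, card_erase_of_mem hu, nsmul_eq_mul, Nat.cast_pred (card_pos.mpr ⟨u, hu⟩)]
      _ = #T * (#T - 1) * b := by
          rw [sum_const, nsmul_eq_mul, mul_assoc]
  have hsum : #T * a ≤ (∑ v ∈ T, #(A v) : ℝ) := by
    simpa only [sum_const, nsmul_eq_mul] using sum_le_sum ha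
  linarith

end Finset

theorem stmt1_general (k f : ℕ)
    (γ : ℝ)
    (c : ℕ)
    (β : ℝ) (hβ : 0 < β)
    (hβγ : 1 + ((c : ℝ) + 1) ^ 2 * β < ((c : ℝ) + 1) * γ) :
    ∃ n0 : ℕ, ∀ n : ℕ, n0 ≤ n →
    ∀ (VF : Type) (_ : Fintype VF) (_ : DecidableEq VF),
    Fintype.card VF = f →
    ∀ EF : Finset (Finset VF), (∀ e ∈ EF, e.card = k) →
    ∀ E : Finset (Finset (Fin n)), (∀ e ∈ E, e.card = k) →
    (∀ v : Fin n, γ * (n : ℝ) ^ (f - 1) ≤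
      (Finset.card ((Finset.univ.powersetCard (f - 1)).filter
        (fun W : Finset (Fin n) => v ∉ W ∧ HasSpanningCopy EF E (insert v W))) : ℝ)) →
    ∀ T : Finset (Fin n), T.card = c + 1 →
    ∃ u ∈ T, ∃ w ∈ T, u ≠ w ∧
      β * (n : ℝ) ^ (f - 1) ≤
      (Finset.card ((Finset.univ.powersetCard (f - 1)).filter
        (fun W : Finset (Fin n) => u ∉ W ∧ w ∉ W ∧
          HasSpanningCopy EF E (insert u W) ∧ HasSpanningCopy EF E (insert w W))) : ℝ) := by
  refine ⟨1, fun n hn VF _ _ _ EF _ E _ hdeg T hT => ?_⟩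
  set U := (univ : Finset (Fin n)).powersetCard (f - 1)
  have hU : (#U : ℝ) ≤ (n : ℝ) ^ (f - 1) := by
    have := card_powersetCard_univ_le_pow (β := Fin n) (f - 1)
    rw [Fintype.card_fin] at this
    exact_mod_cast this
  set N : ℝ := (n : ℝ) ^ (f - 1)
  have hN : 0 < N := by positivity
  have hcount : (#U : ℝ) + #T * (#T - 1) * (β * N) < #T * (γ * N) := by
    rw [hT]
    push_cast
    nlinarith [mul_lt_mul_of_pos_right hβγ hN, mul_pos hβ hN]
  obtain ⟨u, hu, w, hw, huw, hle⟩ :=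
    exists_ne_le_card_inter (fun v _ => filter_subset _ U) (fun v _ => hdeg v) hcount
  refine ⟨u, hu, w, hw, huw, hle.trans_eq ?_⟩
  rw [← filter_and]
  congr 2
  ext W
  simp only [mem_filter]
  tauto

theorem stmt1 (k f : ℕ) (hk : 2 ≤ k) (hf : 2 ≤ f)
    (γ : ℝ) (hγ0 : 0 < γ) (hγ1 : γ < 1)
    (c : ℕ) (hc : c = ⌊1 / γ⌋₊)
    (β : ℝ) (hβ : 0 < β)
    (hβγ : 1 + ((c : ℝ) + 1) ^ 2 * β < ((c : ℝ) + 1) * γ) :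
    ∃ n0 : ℕ, ∀ n : ℕ, n0 ≤ n →
    ∀ (VF : Type) (_ : Fintype VF) (_ : DecidableEq VF),
    Fintype.card VF = f →
    ∀ EF : Finset (Finset VF), (∀ e ∈ EF, e.card = k) →
    ∀ E : Finset (Finset (Fin n)), (∀ e ∈ E, e.card = k) →
    (∀ v : Fin n, γ * (n : ℝ) ^ (f - 1) ≤
      (Finset.card ((Finset.univ.powersetCard (f - 1)).filter
        (fun W : Finset (Fin n) => v ∉ W ∧ HasSpanningCopy EF E (insert v W))) : ℝ)) →
    ∀ T : Finset (Fin n), T.card = c + 1 →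
    ∃ u ∈ T, ∃ w ∈ T, u ≠ w ∧
      β * (n : ℝ) ^ (f - 1) ≤
      (Finset.card ((Finset.univ.powersetCard (f - 1)).filter
        (fun W : Finset (Fin n) => u ∉ W ∧ w ∉ W ∧
          HasSpanningCopy EF E (insert u W) ∧ HasSpanningCopy EF E (insert w W))) : ℝ) :=
  stmt1_general k f γ c β hβ hβγ
end

section
/- Let $F$ be a complete $k$-partite $k$-uniform hypergraph with parts of sizes $a_1,\dots,a_k$ where $d=\gcd(a_1,\dots,a_k)>1$. Then $(1,-1)$ does not lie in the integer lattice $L^{k-1}_F$ generated by all vectors $(|V_1|,|V_2|)$ over $(k-1)$-shadow disjoint bipartitions $\{V_1,V_2\}$ of $V(F)$. -/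
open Finset

lemma card_dvd_aux {k : ℕ} {V : Type} [Fintype V] [DecidableEq V]
    (U : Fin k → Finset V) (hpart : ∀ v : V, ∃! i, v ∈ U i)
    (W : Finset V) (h : ∀ i, U i ⊆ W ∨ Disjoint (U i) W)
    {d : ℕ} (hd : ∀ i, d ∣ (U i).card) : d ∣ W.card := by
  have hW : W = univ.biUnion fun i => U i ∩ W := by
    ext x
    simp only [mem_biUnion, mem_univ, true_and, mem_inter]
    constructor
    · intro hx
      obtain ⟨i, hi, -⟩ := hpart x
      exact ⟨i, hi, hx⟩
    · rintro ⟨i, -, hx⟩; exact hx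
  rw [hW, card_biUnion]
  · refine Finset.dvd_sum fun i _ => ?_
    rcases h i with h1 | h1
    · rw [Finset.inter_eq_left.2 h1]; exact hd i
    · rw [Finset.disjoint_iff_inter_eq_empty.1 h1]; simp
  · intro i _ j _ hij
    have hd2 : Disjoint (U i) (U j) := by
      rw [Finset.disjoint_left]
      intro x hx hx'
      exact hij ((hpart x).unique hx hx')
    exact hd2.mono inter_subset_left inter_subset_left

theorem stmt5 (k : ℕ) (hk : 2 ≤ k) (V : Type) [Fintype V] [DecidableEq V]
    (U : Fin k → Finset V) (hpart : ∀ v : V, ∃! i, v ∈ U i)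
    (hne : ∀ i, (U i).Nonempty)
    (hgcd : 1 < Finset.univ.gcd fun i => (U i).card) :
    ((1 : ℤ), (-1 : ℤ)) ∉ AddSubgroup.closure
      {x : ℤ × ℤ | ∃ V1 V2 : Finset V,
        V1 ∪ V2 = Finset.univ ∧ Disjoint V1 V2 ∧
        (∀ e e' : Finset V,
          (∀ i, (e ∩ U i).card = 1) → (∀ i, (e' ∩ U i).card = 1) →
          ((e ∩ V1).card, (e ∩ V2).card) ≠ ((e' ∩ V1).card, (e' ∩ V2).card) →
          (e ∩ e').card < k - 1) ∧
        x = (((V1.card : ℤ)), ((V2.card : ℤ)))} := by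
  intro hmem
  set d : ℕ := Finset.univ.gcd fun i => (U i).card with hdef
  have hdvd : ∀ i, d ∣ (U i).card := fun i => Finset.gcd_dvd (mem_univ i)
  have huniq : ∀ (x : V) (j j' : Fin k), x ∈ U j → x ∈ U j' → j = j' :=
    fun x j j' h h' => (hpart x).unique h h'
  -- cardinality of edge formula
  have hcard : ∀ (f : Fin k → V), (∀ j, f j ∈ U j) →
      ∀ j, ((image f univ) ∩ U j).card = 1 := by
    intro f hf j
    have : (image f univ) ∩ U j = {f j} := by
      ext x
      simp only [mem_inter, mem_image, mem_univ, true_and, mem_singleton]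
      constructor
      · rintro ⟨⟨j', rfl⟩, hx⟩
        rw [huniq _ _ _ (hf j') hx]
      · rintro rfl
        exact ⟨⟨j, rfl⟩, hf j⟩
    rw [this, card_singleton]
  have key : {x : ℤ × ℤ | ∃ V1 V2 : Finset V,
        V1 ∪ V2 = Finset.univ ∧ Disjoint V1 V2 ∧
        (∀ e e' : Finset V,
          (∀ i, (e ∩ U i).card = 1) → (∀ i, (e' ∩ U i).card = 1) →
          ((e ∩ V1).card, (e ∩ V2).card) ≠ ((e' ∩ V1).card, (e' ∩ V2).card) →
          (e ∩ e').card < k - 1) ∧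
        x = (((V1.card : ℤ)), ((V2.card : ℤ)))} ⊆
      ((AddSubgroup.zmultiples (d : ℤ)).prod (AddSubgroup.zmultiples (d : ℤ)) : AddSubgroup (ℤ × ℤ)) := by
    rintro ⟨a, b⟩ ⟨V1, V2, hun, hdis, hshadow, hx⟩
    obtain ⟨rfl, rfl⟩ : a = (V1.card : ℤ) ∧ b = (V2.card : ℤ) := by
      simpa [Prod.ext_iff] using hx
    -- key claim: each part lies entirely in V1 or V2
    have hsplit : ∀ i, U i ⊆ V1 ∨ U i ⊆ V2 := by
      intro i
      by_contra hcon
      push_neg at hcon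
      obtain ⟨⟨u, hu, huV1⟩, ⟨u', hu', hu'V2⟩⟩ :
          (∃ u ∈ U i, u ∉ V1) ∧ (∃ u' ∈ U i, u' ∉ V2) := by
        constructor
        · exact not_subset.1 hcon.1
        · exact not_subset.1 hcon.2
      have hmemV : ∀ x : V, x ∈ V1 ∨ x ∈ V2 := by
        intro x
        have : x ∈ V1 ∪ V2 := by rw [hun]; exact mem_univ x
        simpa [mem_union] using this
      have huV2 : u ∈ V2 := (hmemV u).resolve_left huV1
      have hu'V1 : u' ∈ V1 := (hmemV u').resolve_right hu'V2
      have hune : u ≠ u' := by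
        rintro rfl
        exact huV1 hu'V1
      -- build transversals
      set w : Fin k → V := fun j => (hne j).choose with hw
      have hwU : ∀ j, w j ∈ U j := fun j => (hne j).choose_spec
      set v : Fin k → V := Function.update w i u' with hvdef
      have hvU : ∀ j, v j ∈ U j := by
        intro j
        by_cases hj : j = i
        · subst hj; simp [hvdef, hu']
        · simp [hvdef, Function.update_of_ne hj, hwU j]
      set v' : Fin k → V := Function.update v i u with hv'def
      have hv'U : ∀ j, v' j ∈ U j := by
        intro j
        by_cases hj : j = i
        · subst hj; simp [hv'def, hu]
        · simp [hv'def, Function.update_of_ne hj, hvU j]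
      have hvinj : Function.Injective v := by
        intro a b hab
        exact huniq _ _ _ (hab ▸ hvU a) (hvU b)
      have hv'inj : Function.Injective v' := by
        intro a b hab
        exact huniq _ _ _ (hab ▸ hv'U a) (hv'U b)
      set e : Finset V := image v univ with he
      set e' : Finset V := image v' univ with he'
      -- agreement off i
      have hagree : ∀ j, j ≠ i → v' j = v j := by
        intro j hj; simp [hv'def, Function.update_of_ne hj]
      have hvi : v i = u' := by simp [hvdef]
      have hv'i : v' i = u := by simp [hv'def]
      -- first coordinates differ
      have hsubV1 : e' ∩ V1 ⊆ e ∩ V1 := by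
        intro x hx
        rw [mem_inter] at hx ⊢
        obtain ⟨hx1, hx2⟩ := hx
        rw [he', mem_image] at hx1
        obtain ⟨j, -, rfl⟩ := hx1
        by_cases hj : j = i
        · subst hj
          rw [hv'i] at hx2
          exact absurd hx2 huV1
        · refine ⟨?_, hx2⟩
          rw [he, mem_image]
          exact ⟨j, mem_univ j, (hagree j hj).symm⟩
      have hu'e : u' ∈ e ∩ V1 := by
        rw [mem_inter]
        refine ⟨?_, hu'V1⟩
        rw [he, mem_image]
        exact ⟨i, mem_univ i, hvi⟩
      have hu'ne' : u' ∉ e' ∩ V1 := by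
        rw [mem_inter]
        rintro ⟨hx1, -⟩
        rw [he', mem_image] at hx1
        obtain ⟨j, -, hj⟩ := hx1
        have : j = i := huniq _ _ _ (hj ▸ hv'U j) hu'
        subst this
        rw [hv'i] at hj
        exact hune hj
      have hlt : (e' ∩ V1).card < (e ∩ V1).card :=
        card_lt_card ⟨hsubV1, fun hs => hu'ne' (hs hu'e)⟩
      have hnepair : ((e ∩ V1).card, (e ∩ V2).card) ≠ ((e' ∩ V1).card, (e' ∩ V2).card) := by
        intro hp
        rw [Prod.ext_iff] at hp
        omega
      have hshad := hshadow e e' (hcard v hvU) (hcard v' hv'U) hnepair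
      -- but the intersection has k - 1 elements
      have hsubset : image v (univ.erase i) ⊆ e ∩ e' := by
        intro x hx
        rw [mem_image] at hx
        obtain ⟨j, hj, rfl⟩ := hx
        have hji : j ≠ i := (mem_erase.1 hj).1
        rw [mem_inter]
        constructor
        · rw [he, mem_image]; exact ⟨j, mem_univ j, rfl⟩
        · rw [he', mem_image]; exact ⟨j, mem_univ j, hagree j hji⟩
      have hcardsub : (image v (univ.erase i)).card = k - 1 := by
        rw [Finset.card_image_of_injective _ hvinj, card_erase_of_mem (mem_univ i),
          card_univ, Fintype.card_fin]
      have : k - 1 ≤ (e ∩ e').card := hcardsub ▸ card_le_card hsubset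
      omega
    have hd1 : d ∣ V1.card := by
      refine card_dvd_aux U hpart V1 (fun i => ?_) hdvd
      rcases hsplit i with h | h
      · exact Or.inl h
      · exact Or.inr (Finset.disjoint_left.2 fun x hx hx' => disjoint_left.1 hdis hx' (h hx))
    have hd2 : d ∣ V2.card := by
      refine card_dvd_aux U hpart V2 (fun i => ?_) hdvd
      rcases hsplit i with h | h
      · exact Or.inr (Finset.disjoint_left.2 fun x hx hx' => disjoint_left.1 hdis (h hx) hx')
      · exact Or.inl h
    refine AddSubgroup.mem_prod.2 ⟨?_, ?_⟩ <;> rw [Int.mem_zmultiples_iff]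
    · show (d : ℤ) ∣ (V1.card : ℤ)
      exact Int.natCast_dvd_natCast.2 hd1
    · show (d : ℤ) ∣ (V2.card : ℤ)
      exact Int.natCast_dvd_natCast.2 hd2
  have h2 := (AddSubgroup.closure_le _).2 key hmem
  have h3 : (d : ℤ) ∣ 1 := Int.mem_zmultiples_iff.1 (AddSubgroup.mem_prod.1 h2).1
  have : d ≤ 1 := Nat.le_of_dvd one_pos (by exact_mod_cast h3)
  omega
end

section
/- Let $F$ be a $3$-uniform hypergraph and let $H$ be a $3$-uniform hypergraph on vertex set $V(G)\cup\{z\}$ constructed from a graph $G$ as follows: $\{u,v,w\}\subseteq V(G)$ is an edge of $H$ iff $uv,uw,vw\in E(G)$, and for $u,v\in V(G)$, $\{u,v,z\}\in E(H)$ iff $uv\notin E(G)$. Suppose $F$ has the property that for every $v\in V(F)$ there exists $u\in V(F)$ with $N_F(v)\cap N_F(u)\ne\emptyset$. Then $H$ has no $F$-factor. In fact, no copy of $F$ in $H$ covers the vertex $z$. -/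
open Finset

/-
The link of `z` in `H` consists of non-edges of `G`, the link of any other vertex consists of
edges of `G`, so `z` shares no link pair with any other vertex. A copy `φ` of `F` with
`φ v = z` would need a partner `u` of `v` with a common link pair in `F`; its image `φ u ≠ z`
would then share that pair with `z` in `H`.
-/

lemma ne_of_card_eq_three {α : Type*} [DecidableEq α] {a b c : α}
    (h : #{a, b, c} = 3) : a ≠ b ∧ a ≠ c ∧ b ≠ c := by
  refine ⟨?_, ?_, ?_⟩ <;> rintro rfl
  · rw [insert_idem] at h
    exact absurd h (card_le_two.trans_lt (by norm_num)).ne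
  · rw [pair_comm, insert_idem] at h
    exact absurd h (card_le_two.trans_lt (by norm_num)).ne
  · rw [pair_eq_singleton] at h
    exact absurd h (card_le_two.trans_lt (by norm_num)).ne

section ConeHypergraph

variable {V : Type*} [DecidableEq V] {G : SimpleGraph V} {EH : Set (Finset (Option V))}
  (hEH : ∀ e : Finset (Option V), e ∈ EH ↔
    ((∃ u v w : V, G.Adj u v ∧ G.Adj u w ∧ G.Adj v w ∧
        e = ({some u, some v, some w} : Finset (Option V))) ∨
     (∃ u v : V, u ≠ v ∧ ¬ G.Adj u v ∧
        e = ({some u, some v, none} : Finset (Option V)))))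
include hEH

lemma adj_of_mem_of_none_notMem {e : Finset (Option V)} {s t : V} (he : e ∈ EH)
    (hz : none ∉ e) (hs : some s ∈ e) (ht : some t ∈ e) (hst : s ≠ t) : G.Adj s t := by
  rcases (hEH e).1 he with ⟨p, q, r, hpq, hpr, hqr, rfl⟩ | ⟨_, _, _, _, rfl⟩
  · simp only [mem_insert, mem_singleton, Option.some.injEq] at hs ht
    rcases hs with rfl | rfl | rfl <;> rcases ht with rfl | rfl | rfl <;>
      first | exact absurd rfl hst | assumption | exact G.adj_symm ‹_›
  · simp at hz

lemma not_adj_of_none_mem {e : Finset (Option V)} {s t : V} (he : e ∈ EH)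
    (hz : none ∈ e) (hs : some s ∈ e) (ht : some t ∈ e) (hst : s ≠ t) : ¬ G.Adj s t := by
  rcases (hEH e).1 he with ⟨_, _, _, _, _, _, rfl⟩ | ⟨p, q, -, hpq, rfl⟩
  · simp at hz
  · simp only [mem_insert, mem_singleton, Option.some.injEq, reduceCtorEq, or_false] at hs ht
    rcases hs with rfl | rfl <;> rcases ht with rfl | rfl
    exacts [absurd rfl hst, hpq, fun h => hpq h.symm, absurd rfl hst]

lemma insert_some_notMem_of_insert_none_mem {s t : V} (w : V) (hst : s ≠ t)
    (hz : ({none, some s, some t} : Finset (Option V)) ∈ EH) :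
    ({some w, some s, some t} : Finset (Option V)) ∉ EH := fun hw =>
  not_adj_of_none_mem hEH hz (by simp) (by simp) (by simp) hst
    (adj_of_mem_of_none_notMem hEH hw (by simp) (by simp) (by simp) hst)

end ConeHypergraph

theorem stmt10 (VF : Type) [Fintype VF] [DecidableEq VF]
    (EF : Finset (Finset VF)) (hEF : ∀ e ∈ EF, e.card = 3)
    -- every vertex of F has a partner sharing a neighbouring pair
    (hF : ∀ v : VF, ∃ u : VF, u ≠ v ∧ ∃ x y : VF, x ≠ y ∧
      ({v, x, y} : Finset VF) ∈ EF ∧ ({u, x, y} : Finset VF) ∈ EF)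
    (V : Type) [Fintype V] [DecidableEq V] (G : SimpleGraph V)
    (EH : Set (Finset (Option V)))
    (hEH : ∀ e : Finset (Option V), e ∈ EH ↔
      ((∃ u v w : V, G.Adj u v ∧ G.Adj u w ∧ G.Adj v w ∧
          e = ({some u, some v, some w} : Finset (Option V))) ∨
       (∃ u v : V, u ≠ v ∧ ¬ G.Adj u v ∧
          e = ({some u, some v, none} : Finset (Option V))))) :
    -- no copy of F in H covers the vertex z = none
    (¬ ∃ φ : VF → Option V, Function.Injective φ ∧
        (∀ e ∈ EF, e.image φ ∈ EH) ∧ none ∈ Set.range φ) ∧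
    -- H has no F-factor
    (¬ ∃ Fam : Finset (Finset (Option V)),
        (∀ P ∈ Fam, ∀ Q ∈ Fam, P ≠ Q → Disjoint P Q) ∧
        Fam.biUnion id = Finset.univ ∧
        (∀ P ∈ Fam, ∃ φ : VF → Option V, Function.Injective φ ∧
          Finset.image φ Finset.univ = P ∧ ∀ e ∈ EF, e.image φ ∈ EH)) := by
  have no_copy_covers_none : ¬ ∃ φ : VF → Option V, Function.Injective φ ∧
      (∀ e ∈ EF, e.image φ ∈ EH) ∧ none ∈ Set.range φ := by
    rintro ⟨φ, hinj, hcopy, v, hv⟩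
    obtain ⟨u, huv, x, y, hxy, hvxy, huxy⟩ := hF v
    obtain ⟨hvx, hvy, -⟩ := ne_of_card_eq_three (hEF _ hvxy)
    obtain ⟨s, hs⟩ := Option.ne_none_iff_exists'.1 (hv ▸ hinj.ne hvx.symm)
    obtain ⟨t, ht⟩ := Option.ne_none_iff_exists'.1 (hv ▸ hinj.ne hvy.symm)
    obtain ⟨w, hw⟩ := Option.ne_none_iff_exists'.1 (hv ▸ hinj.ne huv)
    have hst : s ≠ t := fun h => hxy (hinj (by rw [hs, ht, h]))
    have hz := hcopy _ hvxy
    have hu := hcopy _ huxy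
    simp only [image_insert, image_singleton, hv, hs, ht, hw] at hz hu
    exact insert_some_notMem_of_insert_none_mem hEH w hst hz hu
  refine ⟨no_copy_covers_none, ?_⟩
  rintro ⟨Fam, -, hcover, hcopies⟩
  obtain ⟨P, hP, hnone⟩ := mem_biUnion.1 (hcover ▸ mem_univ (none : Option V))
  obtain ⟨φ, hinj, rfl, hcopy⟩ := hcopies P hP
  obtain ⟨v, -, hv⟩ := mem_image.1 hnone
  exact no_copy_covers_none ⟨φ, hinj, hcopy, v, hv⟩
end

section
/- Let $k\ge 3$, $F\in{\bf FACTOR}_3^{\ppoints,2}$ be a $3$-graph on $f$ vertices, i.e., for all $0<p,\alpha<1$ there exist $n_0$ and $\mu>0$ such that every $(n,p,\mu,\ppoints)$-dense $3$-graph $H$ with $\delta_2(H)\ge\alpha n$, $n\ge n_0$, $f\mid n$, has an $F$-factor. Then $\pi_{\ppoints}(F)=0$; that is, for every $p>0$ there exist $\mu>0$ and $n_0$ such that every $(n,p,\mu,\ppoints)$-dense $3$-graph with $n\ge n_0$ contains a copy of $F$. -/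
/-!
Add `m ≈ n / (2f)` new vertices that form an edge with every pair, choosing `m` so that
`f ∣ n + m`. Only `O((n + m)²)` triples change status, so the augmented hypergraph is still
`(min p 1, μ')`-dense, and its codegree is at least `m - 2`, a fixed fraction of `n + m`.
Hence it has an `F`-factor. The factor has `(n + m) / f > m` parts and each new vertex lies in
only one of them, so some copy of `F` uses old vertices only and is a copy in the original
hypergraph.
-/

open Finset
open scoped Classical

/-- A 3-graph on `Fin n` is `(p, μ, dot)`-dense. -/
def DotDense (n : ℕ) (E : Finset (Finset (Fin n))) (p μ : ℝ) : Prop :=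
  ∀ X1 X2 X3 : Finset (Fin n),
    p * X1.card * X2.card * X3.card - μ * (n : ℝ) ^ 3 ≤
    (Finset.card ((X1 ×ˢ X2 ×ˢ X3).filter
      (fun t => ({t.1, t.2.1, t.2.2} : Finset (Fin n)) ∈ E)) : ℝ)

/-- The hypergraph on `Fin n` with edge set `E` has an `F`-factor,
where `F` has vertex type `VF` and edge set `EF`. -/
def HasFactor (VF : Type) [Fintype VF] [DecidableEq VF] (EF : Finset (Finset VF))
    (n : ℕ) (E : Finset (Finset (Fin n))) : Prop :=
  ∃ Fam : Finset (Finset (Fin n)),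
    (∀ P ∈ Fam, ∀ Q ∈ Fam, P ≠ Q → Disjoint P Q) ∧
    Fam.biUnion id = Finset.univ ∧
    ∀ P ∈ Fam, ∃ φ : VF → Fin n, Function.Injective φ ∧
      Finset.image φ Finset.univ = P ∧ ∀ e ∈ EF, e.image φ ∈ E

section Hypergraph

variable {β : Type*} [DecidableEq β]

def edgeTriples (E : Finset (Finset β)) (X₁ X₂ X₃ : Finset β) : Finset (β × β × β) :=
  (X₁ ×ˢ X₂ ×ˢ X₃).filter (fun t => ({t.1, t.2.1, t.2.2} : Finset β) ∈ E)

def Dominates (H : Finset β) (E : Finset (Finset β)) : Prop :=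
  ∀ e : Finset β, #e = 3 → ¬Disjoint e H → e ∈ E

theorem Dominates.card_le_codegree_add_two {H : Finset β} {E : Finset (Finset β)}
    (hH : Dominates H E) {u v : β} (huv : u ≠ v) :
    #H ≤ #(E.filter (fun e => u ∈ e ∧ v ∈ e)) + 2 := by
  have hmaps : Set.MapsTo (fun w => ({u, v, w} : Finset β)) ↑(H \ {u, v})
      ↑(E.filter (fun e => u ∈ e ∧ v ∈ e)) := by
    intro w hw
    simp only [coe_sdiff, Set.mem_sdiff, mem_coe, coe_insert, coe_singleton, Set.mem_insert_iff,
      Set.mem_singleton_iff, not_or] at hw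
    obtain ⟨hwH, hwu, hwv⟩ := hw
    have h3 : #({u, v, w} : Finset β) = 3 :=
      card_eq_three.mpr ⟨u, v, w, huv, Ne.symm hwu, Ne.symm hwv, rfl⟩
    refine mem_filter.mpr ⟨hH _ h3 (not_disjoint_iff.mpr ⟨w, by simp, hwH⟩), by simp, by simp⟩
  have hinj : Set.InjOn (fun w => ({u, v, w} : Finset β)) ↑(H \ {u, v}) := by
    intro a ha b _ hab
    have ha' : a ∉ ({u, v} : Finset β) := (mem_sdiff.mp ha).2
    have : a ∈ ({u, v, b} : Finset β) := by
      rw [← show ({u, v, a} : Finset β) = {u, v, b} from hab]; simp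
    simp only [mem_insert, mem_singleton] at this ha'
    tauto
  calc #H ≤ #(H \ {u, v}) + #({u, v} : Finset β) := card_le_card_sdiff_add_card
    _ ≤ #(E.filter (fun e => u ∈ e ∧ v ∈ e)) + 2 :=
      add_le_add (card_le_card_of_injOn _ hmaps hinj) card_le_two

theorem card_filter_not_pairwise_ne_le [Fintype β] :
    #((univ : Finset (β × β × β)).filter
      (fun t => ¬(t.1 ≠ t.2.1 ∧ t.1 ≠ t.2.2 ∧ t.2.1 ≠ t.2.2))) ≤ 3 * Fintype.card β ^ 2 := by
  let pairs : Finset (β × β) := univ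
  have hcover : (univ : Finset (β × β × β)).filter
      (fun t => ¬(t.1 ≠ t.2.1 ∧ t.1 ≠ t.2.2 ∧ t.2.1 ≠ t.2.2)) ⊆
      pairs.image (fun q => (q.1, q.1, q.2)) ∪ pairs.image (fun q => (q.1, q.2, q.1)) ∪
        pairs.image (fun q => (q.2, q.1, q.1)) := by
    rintro ⟨a, b, c⟩ h
    simp only [mem_filter, mem_univ, true_and, not_and_or, not_not] at h
    rcases h with rfl | rfl | rfl <;> simp [pairs]
  calc _ ≤ _ := card_le_card hcover
    _ ≤ #pairs + #pairs + #pairs :=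
      (card_union_le _ _).trans (add_le_add ((card_union_le _ _).trans
        (add_le_add card_image_le card_image_le)) card_image_le)
    _ = 3 * Fintype.card β ^ 2 := by simp [pairs, sq]; ring

theorem Dominates.card_edgeTriples [Fintype β] {H : Finset β} {E : Finset (Finset β)}
    (hH : Dominates H E) (X₁ X₂ X₃ : Finset β) :
    #(edgeTriples E (X₁ \ H) (X₂ \ H) (X₃ \ H)) + #X₁ * #X₂ * #X₃ ≤
      #(edgeTriples E X₁ X₂ X₃) + #(X₁ \ H) * #(X₂ \ H) * #(X₃ \ H) +
        3 * Fintype.card β ^ 2 := by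
  set X := X₁ ×ˢ X₂ ×ˢ X₃
  set L := (X₁ \ H) ×ˢ (X₂ \ H) ×ˢ (X₃ \ H)
  have hLX : L ⊆ X := product_subset_product sdiff_subset (product_subset_product
    sdiff_subset sdiff_subset)
  set distinct : β × β × β → Prop := fun t => t.1 ≠ t.2.1 ∧ t.1 ≠ t.2.2 ∧ t.2.1 ≠ t.2.2
  -- a triple of `X` outside `L` has a coordinate in `H`, so if it spans a 3-set it is an edge
  have hsub : edgeTriples E (X₁ \ H) (X₂ \ H) (X₃ \ H) ∪ (X \ L).filter distinct ⊆
      edgeTriples E X₁ X₂ X₃ := by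
    refine union_subset (filter_subset_filter _ hLX) ?_
    rintro ⟨a, b, c⟩ ht
    simp only [mem_filter, mem_sdiff, X, L, distinct, mem_product] at ht
    obtain ⟨⟨⟨ha, hb, hc⟩, hnot⟩, hab, hac, hbc⟩ := ht
    refine mem_filter.mpr ⟨mem_product.mpr ⟨ha, mem_product.mpr ⟨hb, hc⟩⟩, hH _
      (card_eq_three.mpr ⟨a, b, c, hab, hac, hbc, rfl⟩) ?_⟩
    rw [not_disjoint_iff]
    by_contra! hout
    exact hnot ⟨⟨ha, hout a (by simp)⟩, ⟨hb, hout b (by simp)⟩, hc, hout c (by simp)⟩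
  have hdisj : Disjoint (edgeTriples E (X₁ \ H) (X₂ \ H) (X₃ \ H)) ((X \ L).filter distinct) :=
    disjoint_of_subset_left (filter_subset _ _)
      (disjoint_of_subset_right (filter_subset _ _) disjoint_sdiff)
  have hbad : #((X \ L).filter (fun t => ¬distinct t)) ≤ 3 * Fintype.card β ^ 2 :=
    (card_le_card (filter_subset_filter _ (subset_univ _))).trans
      card_filter_not_pairwise_ne_le
  have hsplit : #((X \ L).filter distinct) + #((X \ L).filter (fun t => ¬distinct t)) =
      #(X \ L) := card_filter_add_card_filter_not _
  have hXL := card_sdiff_add_card_eq_card hLX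
  have hunion := card_le_card hsub
  rw [card_union_of_disjoint hdisj] at hunion
  have hX : #X = #X₁ * #X₂ * #X₃ := by simp only [X, card_product, mul_assoc]
  have hL : #L = #(X₁ \ H) * #(X₂ \ H) * #(X₃ \ H) := by simp only [L, card_product, mul_assoc]
  omega

theorem card_edgeTriples_le_map {α : Type*} [DecidableEq α] (g : α ↪ β)
    {E : Finset (Finset α)} {E' : Finset (Finset β)} (hE : ∀ e ∈ E, e.map g ∈ E')
    (Y₁ Y₂ Y₃ : Finset α) :
    #(edgeTriples E Y₁ Y₂ Y₃) ≤ #(edgeTriples E' (Y₁.map g) (Y₂.map g) (Y₃.map g)) := by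
  refine card_le_card_of_injOn (fun t => (g t.1, g t.2.1, g t.2.2)) ?_ ?_
  · rintro ⟨a, b, c⟩ ht
    simp only [edgeTriples, coe_filter, mem_product, Set.mem_ofPred_eq] at ht ⊢
    obtain ⟨⟨ha, hb, hc⟩, he⟩ := ht
    refine ⟨⟨mem_map_of_mem g ha, mem_map_of_mem g hb, mem_map_of_mem g hc⟩, ?_⟩
    simpa [map_insert, map_singleton] using hE _ he
  · rintro ⟨a, b, c⟩ - ⟨a', b', c'⟩ - h
    simp only [Prod.mk.injEq, g.injective.eq_iff] at h
    simp [h]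

theorem exists_disjoint_of_card_lt {Fam : Finset (Finset β)}
    (hFam : ∀ P ∈ Fam, ∀ Q ∈ Fam, P ≠ Q → Disjoint P Q) {H : Finset β} (hH : #H < #Fam) :
    ∃ P ∈ Fam, Disjoint P H := by
  by_contra! hmeet
  have hpw : (Fam : Set (Finset β)).PairwiseDisjoint (· ∩ H) := fun P hP Q hQ hne =>
    (hFam P hP Q hQ hne).mono inter_subset_left inter_subset_left
  have := (card_le_card_biUnion hpw fun P hP =>
    not_disjoint_iff_nonempty_inter.mp (hmeet P hP)).trans
      (card_le_card (biUnion_subset.mpr fun P _ => inter_subset_right))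
  omega

end Hypergraph

theorem DotDense.mono {n : ℕ} {E : Finset (Finset (Fin n))} {p p' μ μ' : ℝ}
    (h : DotDense n E p μ) (hp : p' ≤ p) (hμ : μ ≤ μ') : DotDense n E p' μ' := by
  intro X₁ X₂ X₃
  have hprod : p' * #X₁ * #X₂ * #X₃ ≤ p * #X₁ * #X₂ * #X₃ := by
    simp only [mul_assoc]
    exact mul_le_mul_of_nonneg_right hp (by positivity)
  nlinarith [h X₁ X₂ X₃, pow_nonneg (Nat.cast_nonneg (α := ℝ) n) 3]

section DominatingVertices

variable (n m : ℕ)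

def newVertices : Finset (Fin (n + m)) := (univ : Finset (Fin m)).map (Fin.natAddEmb n)

def addDominatingVertices (E : Finset (Finset (Fin n))) : Finset (Finset (Fin (n + m))) :=
  E.image (Finset.map (Fin.castAddEmb m)) ∪
    (univ.powersetCard 3).filter (fun e => ¬Disjoint e (newVertices n m))

variable {n m}

theorem card_newVertices : #(newVertices n m) = m := by
  simp [newVertices]

theorem castAdd_notMem_newVertices (i : Fin n) : Fin.castAdd m i ∉ newVertices n m := by
  simp only [newVertices, mem_map, mem_univ, true_and, not_exists]
  intro j hj
  have := congrArg Fin.val hj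
  simp only [Fin.natAddEmb_apply, Fin.val_natAdd, Fin.val_castAdd] at this
  omega

theorem exists_castAdd_eq_of_notMem_newVertices {v : Fin (n + m)} (hv : v ∉ newVertices n m) :
    ∃ i, Fin.castAdd m i = v := by
  induction v using Fin.addCases with
  | left i => exact ⟨i, rfl⟩
  | right j => exact absurd (mem_map_of_mem (Fin.natAddEmb n) (mem_univ j)) hv

theorem exists_map_castAdd_eq_sdiff_newVertices (X : Finset (Fin (n + m))) :
    ∃ Y : Finset (Fin n), X \ newVertices n m = Y.map (Fin.castAddEmb m) := by
  refine ⟨X.preimage (Fin.castAdd m) (Fin.castAdd_injective n m).injOn, ?_⟩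
  ext v
  constructor
  · intro hv
    obtain ⟨hvX, hvnew⟩ := mem_sdiff.mp hv
    obtain ⟨i, rfl⟩ := exists_castAdd_eq_of_notMem_newVertices hvnew
    exact mem_map_of_mem _ (mem_preimage.mpr hvX)
  · intro hv
    obtain ⟨i, hi, rfl⟩ := mem_map.mp hv
    exact mem_sdiff.mpr ⟨mem_preimage.mp hi, castAdd_notMem_newVertices i⟩

variable {E : Finset (Finset (Fin n))}

theorem dominates_addDominatingVertices :
    Dominates (newVertices n m) (addDominatingVertices n m E) := fun _ he hmeet =>
  mem_union_right _ (mem_filter.mpr ⟨mem_powersetCard_univ.mpr he, hmeet⟩)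

theorem card_of_mem_addDominatingVertices (hE : ∀ e ∈ E, #e = 3) :
    ∀ e ∈ addDominatingVertices n m E, #e = 3 := by
  intro e he
  rcases mem_union.mp he with he | he
  · obtain ⟨e₀, he₀, rfl⟩ := mem_image.mp he
    rw [card_map, hE e₀ he₀]
  · exact mem_powersetCard_univ.mp (mem_filter.mp he).1

theorem map_castAdd_mem_addDominatingVertices_iff {e : Finset (Fin n)} :
    e.map (Fin.castAddEmb m) ∈ addDominatingVertices n m E ↔ e ∈ E := by
  refine ⟨fun he => ?_, fun he => mem_union_left _ (mem_image_of_mem _ he)⟩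
  rcases mem_union.mp he with he | he
  · exact (map_injective _).mem_finset_image.mp he
  · refine absurd (disjoint_left.mpr fun v hv => ?_) (mem_filter.mp he).2
    obtain ⟨i, -, rfl⟩ := mem_map.mp hv
    exact castAdd_notMem_newVertices i

theorem exists_card_edgeTriples_addDominatingVertices_le (X₁ X₂ X₃ : Finset (Fin (n + m))) :
    ∃ Y₁ Y₂ Y₃ : Finset (Fin n), #Y₁ ≤ #X₁ ∧ #Y₂ ≤ #X₂ ∧ #Y₃ ≤ #X₃ ∧
      #(edgeTriples E Y₁ Y₂ Y₃) + #X₁ * #X₂ * #X₃ ≤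
        #(edgeTriples (addDominatingVertices n m E) X₁ X₂ X₃) + #Y₁ * #Y₂ * #Y₃ +
          3 * (n + m) ^ 2 := by
  have hcount := (dominates_addDominatingVertices (E := E)).card_edgeTriples X₁ X₂ X₃
  obtain ⟨Y₁, hY₁⟩ := exists_map_castAdd_eq_sdiff_newVertices X₁
  obtain ⟨Y₂, hY₂⟩ := exists_map_castAdd_eq_sdiff_newVertices X₂
  obtain ⟨Y₃, hY₃⟩ := exists_map_castAdd_eq_sdiff_newVertices X₃
  have hYX : ∀ {X : Finset (Fin (n + m))} {Y : Finset (Fin n)},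
      X \ newVertices n m = Y.map (Fin.castAddEmb m) → #Y ≤ #X :=
    fun h => card_map (Fin.castAddEmb m) ▸ h ▸ card_le_card sdiff_subset
  have hpull := card_edgeTriples_le_map (Fin.castAddEmb m) (E := E)
    (fun _ he => map_castAdd_mem_addDominatingVertices_iff.mpr he) Y₁ Y₂ Y₃
  rw [hY₁, hY₂, hY₃, Fintype.card_fin] at hcount
  simp only [card_map] at hcount
  exact ⟨Y₁, Y₂, Y₃, hYX hY₁, hYX hY₂, hYX hY₃, by omega⟩

theorem dotDense_addDominatingVertices {p μ : ℝ} (hμ : 0 ≤ μ) (hE : DotDense n E p μ) :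
    DotDense (n + m) (addDominatingVertices n m E) (min p 1) (μ + 3 / (n + m)) := by
  intro X₁ X₂ X₃
  obtain ⟨Y₁, Y₂, Y₃, hl₁, hl₂, hl₃, hcount⟩ :=
    exists_card_edgeTriples_addDominatingVertices_le (E := E) X₁ X₂ X₃
  have hlow : p * #Y₁ * #Y₂ * #Y₃ - μ * (n : ℝ) ^ 3 ≤ #(edgeTriples E Y₁ Y₂ Y₃) := hE Y₁ Y₂ Y₃
  change _ ≤ (#(edgeTriples _ X₁ X₂ X₃) : ℝ)
  have hl : (#Y₁ * #Y₂ * #Y₃ : ℝ) ≤ #X₁ * #X₂ * #X₃ := by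
    exact_mod_cast Nat.mul_le_mul (Nat.mul_le_mul hl₁ hl₂) hl₃
  have hmin : min p 1 * #X₁ * #X₂ * #X₃ ≤
      p * #Y₁ * #Y₂ * #Y₃ + (#X₁ * #X₂ * #X₃ - #Y₁ * #Y₂ * #Y₃) := by
    have h₁ := mul_nonneg (sub_nonneg.2 (min_le_left p 1))
      (by positivity : (0 : ℝ) ≤ #Y₁ * #Y₂ * #Y₃)
    have h₂ := mul_nonneg (sub_nonneg.2 (min_le_right p 1)) (sub_nonneg.2 hl)
    linarith
  have hN : μ * (n : ℝ) ^ 3 + 3 * ((n : ℝ) + m) ^ 2 ≤ (μ + 3 / (n + m)) * ((n : ℝ) + m) ^ 3 := by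
    have hcube : (3 / ((n : ℝ) + m)) * ((n : ℝ) + m) ^ 3 = 3 * ((n : ℝ) + m) ^ 2 := by
      rcases eq_or_ne ((n : ℝ) + m) 0 with h | h
      · simp [h]
      · field_simp
    have hn : (n : ℝ) ^ 3 ≤ ((n : ℝ) + m) ^ 3 := by
      gcongr
      exact le_add_of_nonneg_right m.cast_nonneg
    nlinarith [mul_le_mul_of_nonneg_left hn hμ]
  have hcountR : (#(edgeTriples E Y₁ Y₂ Y₃) : ℝ) + #X₁ * #X₂ * #X₃ ≤
      #(edgeTriples (addDominatingVertices n m E) X₁ X₂ X₃) + #Y₁ * #Y₂ * #Y₃ +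
        3 * ((n : ℝ) + m) ^ 2 := by exact_mod_cast hcount
  push_cast
  linarith

end DominatingVertices

theorem HasFactor.exists_copy_disjoint {VF : Type} [Fintype VF] [DecidableEq VF]
    {EF : Finset (Finset VF)} {N : ℕ} {E : Finset (Finset (Fin N))} (h : HasFactor VF EF N E)
    {H : Finset (Fin N)} (hH : #H * Fintype.card VF < N) :
    ∃ φ : VF → Fin N, Function.Injective φ ∧ (∀ x, φ x ∉ H) ∧ ∀ e ∈ EF, e.image φ ∈ E := by
  obtain ⟨Fam, hdisj, hcover, hcopy⟩ := h
  have hcard : #Fam * Fintype.card VF = N := by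
    have hsum := card_biUnion (s := Fam) (t := id) hdisj
    rw [hcover, card_univ, Fintype.card_fin] at hsum
    refine Eq.trans ?_ hsum.symm
    rw [← smul_eq_mul, ← sum_const]
    refine sum_congr rfl fun P hP => ?_
    obtain ⟨φ, hφ, rfl, -⟩ := hcopy P hP
    rw [id, card_image_of_injective _ hφ, card_univ]
  obtain ⟨P, hP, hPH⟩ := exists_disjoint_of_card_lt hdisj
    (Nat.lt_of_mul_lt_mul_right (hH.trans_eq hcard.symm))
  obtain ⟨φ, hφ, rfl, hedges⟩ := hcopy P hP
  exact ⟨φ, hφ, fun x => disjoint_left.mp hPH (mem_image_of_mem φ (mem_univ x)), hedges⟩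

theorem exists_copy_of_addDominatingVertices {n m : ℕ} {E : Finset (Finset (Fin n))}
    {VF : Type} [DecidableEq VF] {EF : Finset (Finset VF)} {φ : VF → Fin (n + m)}
    (hφ : Function.Injective φ) (hold : ∀ x, φ x ∉ newVertices n m)
    (hedges : ∀ e ∈ EF, e.image φ ∈ addDominatingVertices n m E) :
    ∃ ψ : VF → Fin n, Function.Injective ψ ∧ ∀ e ∈ EF, e.image ψ ∈ E := by
  choose ψ hψ using fun x => exists_castAdd_eq_of_notMem_newVertices (hold x)
  have hφψ : φ = Fin.castAddEmb m ∘ ψ := funext fun x => (hψ x).symm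
  subst hφψ
  refine ⟨ψ, hφ.of_comp, fun e he => ?_⟩
  rw [← map_castAdd_mem_addDominatingVertices_iff (m := m), map_eq_image, image_image]
  exact hedges e he

theorem exists_padding {f n : ℕ} (hf : 0 < f) (hn : 8 * f ^ 2 ≤ n) :
    ∃ m, f ∣ n + m ∧ m * f < n + m ∧ n + m + 16 * f ≤ 8 * f * m := by
  obtain ⟨b, s, hs, hnb⟩ : ∃ b s, s < 2 * f ^ 2 ∧ n = 2 * f ^ 2 * b + s :=
    ⟨n / (2 * f ^ 2), n % (2 * f ^ 2), Nat.mod_lt _ (by positivity), (Nat.div_add_mod _ _).symm⟩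
  obtain ⟨a, r, hr, hna⟩ : ∃ a r, r < f ∧ n = f * a + r :=
    ⟨n / f, n % f, Nat.mod_lt _ hf, (Nat.div_add_mod _ _).symm⟩
  have hb : 4 ≤ b := by nlinarith
  obtain ⟨m, hm⟩ : ∃ m, m + r = f * (b + 1) := ⟨f * (b + 1) - r, Nat.sub_add_cancel (by nlinarith)⟩
  refine ⟨m, ⟨a + b + 1, by linarith⟩, ?_, ?_⟩
  · nlinarith
  · nlinarith

theorem stmt12 (VF : Type) [Fintype VF] [DecidableEq VF]
    (f : ℕ) (hf : Fintype.card VF = f)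
    (EF : Finset (Finset VF)) (hEF : ∀ e ∈ EF, e.card = 3)
    -- F ∈ FACTOR_3^{dot,2}
    (hFactor : ∀ p α : ℝ, 0 < p → p < 1 → 0 < α → α < 1 →
      ∃ (n0 : ℕ) (μ : ℝ), 0 < μ ∧ ∀ n : ℕ, n0 ≤ n → f ∣ n →
        ∀ E : Finset (Finset (Fin n)), (∀ e ∈ E, e.card = 3) →
        DotDense n E p μ →
        (∀ u v : Fin n, u ≠ v →
          α * n ≤ ((E.filter (fun e => u ∈ e ∧ v ∈ e)).card : ℝ)) →
        HasFactor VF EF n E) :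
    -- π_dot(F) = 0
    ∀ p : ℝ, 0 < p → ∃ (μ : ℝ) (n0 : ℕ), 0 < μ ∧ ∀ n : ℕ, n0 ≤ n →
      ∀ E : Finset (Finset (Fin n)), (∀ e ∈ E, e.card = 3) → DotDense n E p μ →
      ∃ φ : VF → Fin n, Function.Injective φ ∧ ∀ e ∈ EF, e.image φ ∈ E := by
  intro p hp
  rcases Nat.eq_zero_or_pos f with rfl | hf0
  · have : IsEmpty VF := Fintype.card_eq_zero_iff.mp hf
    refine ⟨1, 0, one_pos, fun n _ E _ _ => ⟨isEmptyElim, isEmptyElim, fun e he => ?_⟩⟩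
    have := (hEF e he).symm.trans_le ((card_le_univ e).trans_eq hf)
    omega
  obtain ⟨n₀, μ, hμ, hfactor⟩ := hFactor (min p (1 / 2)) (1 / (8 * f)) (lt_min hp (by norm_num))
    ((min_le_right _ _).trans_lt (by norm_num)) (by positivity)
    ((div_lt_one (by positivity)).mpr (by norm_cast; omega))
  refine ⟨μ / 2, max n₀ (max (8 * f ^ 2) ⌈6 / μ⌉₊), by positivity, fun n hn E hE3 hE => ?_⟩
  simp only [max_le_iff, Nat.ceil_le] at hn
  obtain ⟨hn₀, hnf, hnμ⟩ := hn
  obtain ⟨m, hdvd, hsmall, hlarge⟩ := exists_padding hf0 hnf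
  have hdense : DotDense (n + m) (addDominatingVertices n m E) (min p (1 / 2)) μ := by
    refine (dotDense_addDominatingVertices (by positivity) hE).mono
      (min_le_min_left _ (by norm_num)) ?_
    have h6 : 6 ≤ μ * ((n : ℝ) + m) := ((div_le_iff₀' hμ).mp hnμ).trans
      (mul_le_mul_of_nonneg_left (le_add_of_nonneg_right m.cast_nonneg) hμ.le)
    have hpos : (0 : ℝ) < n + m := by nlinarith
    have : 3 / ((n : ℝ) + m) ≤ μ / 2 := by rw [div_le_iff₀ hpos]; linarith
    linarith
  have hcodeg : ∀ u v : Fin (n + m), u ≠ v → 1 / (8 * f) * ((n + m : ℕ) : ℝ) ≤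
      #((addDominatingVertices n m E).filter (fun e => u ∈ e ∧ v ∈ e)) := by
    intro u v huv
    have := (dominates_addDominatingVertices (E := E)).card_le_codegree_add_two huv
    rw [card_newVertices] at this
    rw [one_div_mul_eq_div, div_le_iff₀ (by positivity)]
    exact_mod_cast (by nlinarith : n + m ≤ #((addDominatingVertices n m E).filter
      (fun e => u ∈ e ∧ v ∈ e)) * (8 * f))
  obtain ⟨φ, hφ, hold, hedges⟩ := (hfactor (n + m) (by omega) hdvd _
    (card_of_mem_addDominatingVertices hE3) hdense hcodeg).exists_copy_disjoint
      (by rwa [card_newVertices, hf])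
  exact exists_copy_of_addDominatingVertices hφ hold hedges
end
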